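/- The monodromy matrix L(z,λ) = Π_{j=2}^{n+1} R^{(1j)}(z−z_j, λ − η Σ_{1<i<j} h^{(i)} + η Σ_{j<i≤n+1} h^{(i)}) (factors ordered left to right) defines a representation of A(R) on V^{⊗n}: it is of weight zero and satisfies the RLL relation with R. -/

import Mathlib

open Matrix Filter Topology
open scoped BigOperators

noncomputable section

/- The Cartan subalgebra `𝔥` is identified with `ℂ^m = Fin m → ℂ` via an
orthonormal basis `(h_ν)`; a diagonalizable `𝔥`-module is a space `ℂ^ι`
together with a weight function `wt : ι → (Fin m → ℂ)`; `λ ∈ 𝔥` acts on the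
basis vector `i` by the scalar `⟨wt i, λ⟩ = Σ_ν (wt i) ν * λ ν`. -/

variable {m : ℕ}

/-- pairing `⟨μ, X⟩` of a weight with an element of `𝔥`. -/
def pairH (μ X : Fin m → ℂ) : ℂ := ∑ ν, μ ν * X ν

section Emb

variable {α β γ : Type*} [Fintype α] [Fintype β] [Fintype γ]
variable [DecidableEq α] [DecidableEq β] [DecidableEq γ]

/-- `F(λ + c h^{(3)})` acting on factors 1,2 of a triple tensor product:
`f(λ + c h^{(k)}) = Σ_μ P_μ^{(k)} f(λ + c μ)` via the weight projections. -/
def emb12sh (wt : γ → (Fin m → ℂ)) (c : ℂ)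
    (F : (Fin m → ℂ) → Matrix (α × β) (α × β) ℂ) (lam : Fin m → ℂ) :
    Matrix (α × β × γ) (α × β × γ) ℂ :=
  fun p q => F (lam + c • wt p.2.2) (p.1, p.2.1) (q.1, q.2.1) *
    (if p.2.2 = q.2.2 then 1 else 0)

/-- `F(λ + c h^{(2)})` acting on factors 1,3. -/
def emb13sh (wt : β → (Fin m → ℂ)) (c : ℂ)
    (F : (Fin m → ℂ) → Matrix (α × γ) (α × γ) ℂ) (lam : Fin m → ℂ) :
    Matrix (α × β × γ) (α × β × γ) ℂ :=
  fun p q => F (lam + c • wt p.2.1) (p.1, p.2.2) (q.1, q.2.2) *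
    (if p.2.1 = q.2.1 then 1 else 0)

/-- `F(λ + c h^{(1)})` acting on factors 2,3. -/
def emb23sh (wt : α → (Fin m → ℂ)) (c : ℂ)
    (F : (Fin m → ℂ) → Matrix (β × γ) (β × γ) ℂ) (lam : Fin m → ℂ) :
    Matrix (α × β × γ) (α × β × γ) ℂ :=
  fun p q => F (lam + c • wt p.1) (p.2.1, p.2.2) (q.2.1, q.2.2) *
    (if p.1 = q.1 then 1 else 0)

/-- plain (unshifted) embedding into factors 1,2. -/
def emb12p (M : Matrix (α × β) (α × β) ℂ) : Matrix (α × β × γ) (α × β × γ) ℂ :=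
  fun p q => M (p.1, p.2.1) (q.1, q.2.1) * (if p.2.2 = q.2.2 then 1 else 0)

/-- plain embedding into factors 1,3. -/
def emb13p (M : Matrix (α × γ) (α × γ) ℂ) : Matrix (α × β × γ) (α × β × γ) ℂ :=
  fun p q => M (p.1, p.2.2) (q.1, q.2.2) * (if p.2.1 = q.2.1 then 1 else 0)

/-- plain embedding into factors 2,3. -/
def emb23p (M : Matrix (β × γ) (β × γ) ℂ) : Matrix (α × β × γ) (α × β × γ) ℂ :=
  fun p q => M (p.2.1, p.2.2) (q.2.1, q.2.2) * (if p.1 = q.1 then 1 else 0)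

/-- weight-zero condition on a matrix on a two-fold tensor product:
`[X^{(1)} + X^{(2)}, F] = 0` for all `X ∈ 𝔥`. -/
def WeightZero2 (wtA : α → (Fin m → ℂ)) (wtB : β → (Fin m → ℂ))
    (F : Matrix (α × β) (α × β) ℂ) : Prop :=
  ∀ X : Fin m → ℂ,
    Matrix.diagonal (fun p : α × β => pairH (wtA p.1) X + pairH (wtB p.2) X) * F =
    F * Matrix.diagonal (fun p : α × β => pairH (wtA p.1) X + pairH (wtB p.2) X)

end Emb

section RMat

variable {ι : Type*} [Fintype ι] [DecidableEq ι]

/-- the flip `P` of `V ⊗ V`. -/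
def flipP : Matrix (ι × ι) (ι × ι) ℂ := fun p q => if p.1 = q.2 ∧ p.2 = q.1 then 1 else 0

/-- the modified (dynamical) Yang–Baxter equation
`R^{(12)}(z₁₂,λ+ηh^{(3)}) R^{(13)}(z₁₃,λ−ηh^{(2)}) R^{(23)}(z₂₃,λ+ηh^{(1)}) =
 R^{(23)}(z₂₃,λ−ηh^{(1)}) R^{(13)}(z₁₃,λ+ηh^{(2)}) R^{(12)}(z₁₂,λ−ηh^{(3)})`. -/
def MYBE (wt : ι → (Fin m → ℂ)) (η : ℂ)
    (R : ℂ → (Fin m → ℂ) → Matrix (ι × ι) (ι × ι) ℂ) : Prop :=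
  ∀ z₁ z₂ z₃ lam,
    emb12sh wt η (R (z₁ - z₂)) lam * emb13sh wt (-η) (R (z₁ - z₃)) lam *
        emb23sh wt η (R (z₂ - z₃)) lam =
      emb23sh wt (-η) (R (z₂ - z₃)) lam * emb13sh wt η (R (z₁ - z₃)) lam *
        emb12sh wt (-η) (R (z₁ - z₂)) lam

/-- unitarity `R^{(12)}(z,λ) R^{(21)}(−z,λ) = Id`. -/
def RUnitary (R : ℂ → (Fin m → ℂ) → Matrix (ι × ι) (ι × ι) ℂ) : Prop :=
  ∀ z lam, R z lam * (flipP * R (-z) lam * flipP) = 1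

/-- a generalized quantum R-matrix: a weight-zero unitary solution of the
modified Yang–Baxter equation. -/
def IsGenR (wt : ι → (Fin m → ℂ)) (η : ℂ)
    (R : ℂ → (Fin m → ℂ) → Matrix (ι × ι) (ι × ι) ℂ) : Prop :=
  MYBE wt η R ∧ RUnitary R ∧ ∀ z lam, WeightZero2 wt wt (R z lam)

end RMat

section Rep

variable {ι κ : Type*} [Fintype ι] [DecidableEq ι] [Fintype κ] [DecidableEq κ]

/-- the RLL relation defining representations of the elliptic quantum group
`A(R)`:
`R^{(12)}(z₁₂,λ+ηh^{(3)}) L^{(13)}(z₁,λ−ηh^{(2)}) L^{(23)}(z₂,λ+ηh^{(1)}) =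
 L^{(23)}(z₂,λ−ηh^{(1)}) L^{(13)}(z₁,λ+ηh^{(2)}) R^{(12)}(z₁₂,λ−ηh^{(3)})`
in `End(V ⊗ V ⊗ W)`. -/
def RLL (wt : ι → (Fin m → ℂ)) (wtW : κ → (Fin m → ℂ)) (η : ℂ)
    (R : ℂ → (Fin m → ℂ) → Matrix (ι × ι) (ι × ι) ℂ)
    (L : ℂ → (Fin m → ℂ) → Matrix (ι × κ) (ι × κ) ℂ) : Prop :=
  ∀ z₁ z₂ lam,
    emb12sh wtW η (R (z₁ - z₂)) lam * emb13sh wt (-η) (L z₁) lam *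
        emb23sh wt η (L z₂) lam =
      emb23sh wt (-η) (L z₂) lam * emb13sh wt η (L z₁) lam *
        emb12sh wtW (-η) (R (z₁ - z₂)) lam

/-- a representation of `A(R)`: a weight-zero `L`-operator satisfying `RLL`. -/
def IsRep (wt : ι → (Fin m → ℂ)) (wtW : κ → (Fin m → ℂ)) (η : ℂ)
    (R : ℂ → (Fin m → ℂ) → Matrix (ι × ι) (ι × ι) ℂ)
    (L : ℂ → (Fin m → ℂ) → Matrix (ι × κ) (ι × κ) ℂ) : Prop :=
  RLL wt wtW η R L ∧ ∀ z lam, WeightZero2 wt wtW (L z lam)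

end Rep

/-! The proof is by induction on `n`. Splitting off the first tensor factor exhibits the monodromy
matrix of `n + 1` points, up to reindexing, as the tensor product
`L(z, λ) = R^{(12)}(z − z₁, λ + η h^{(3)}) L'^{(13)}(z, λ − η h^{(2)})` of the basic
representation `R(z − z₁, λ)` on `V` with the monodromy matrix `L'` of the remaining points: the
shifts `∓η Σ h^{(i)}` of the factors are exactly the ones this formula produces.

The tensor product of two representations is a representation. On `V ⊗ V ⊗ W₁ ⊗ W₂` the RLL
relation of the product is assembled from those of the two factors, each taken at `λ` shifted by
the weight of the spectator space; in between, operators acting on disjoint factors are commuted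
past each other, which is legitimate because they are of weight zero and each one's dynamical
shift only sees the total weight of the other one's factors. -/

section WeightPreserving

variable {κ κ' α β : Type*}

def IsWeightPreserving (w : κ → Fin m → ℂ) (M : Matrix κ κ ℂ) : Prop :=
  ∀ p q, M p q ≠ 0 → w p = w q

lemma pairH_single (μ : Fin m → ℂ) (ν : Fin m) : pairH μ (Pi.single ν 1) = μ ν := by
  simp [pairH, Pi.single_apply]

lemma pairH_add (μ ν X : Fin m → ℂ) : pairH (μ + ν) X = pairH μ X + pairH ν X := by
  simp [pairH, add_mul, Finset.sum_add_distrib]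

lemma weightZero2_iff [Fintype α] [Fintype β] [DecidableEq α] [DecidableEq β]
    {wtA : α → Fin m → ℂ} {wtB : β → Fin m → ℂ} {F : Matrix (α × β) (α × β) ℂ} :
    WeightZero2 wtA wtB F ↔ IsWeightPreserving (fun p => wtA p.1 + wtB p.2) F := by
  simp only [WeightZero2, ← Matrix.ext_iff, diagonal_mul, mul_diagonal, ← pairH_add,
    mul_comm (F _ _)]
  constructor
  · intro h p q hF
    funext ν
    simpa [pairH_single, hF] using h (Pi.single ν 1) p q
  · intro h X p q
    by_cases hF : F p q = 0
    · simp [hF]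
    · rw [show wtA p.1 + wtB p.2 = wtA q.1 + wtB q.2 from h p q hF]

lemma WeightZero2.apply_eq_zero [Fintype α] [Fintype β] [DecidableEq α] [DecidableEq β]
    {wtA : α → Fin m → ℂ} {wtB : β → Fin m → ℂ} {F : Matrix (α × β) (α × β) ℂ}
    (h : WeightZero2 wtA wtB F) {p q : α × β} (hpq : wtA p.1 + wtB p.2 ≠ wtA q.1 + wtB q.2) :
    F p q = 0 :=
  of_not_not fun hF => hpq (weightZero2_iff.1 h p q hF)

lemma isWeightPreserving_one [DecidableEq κ] (w : κ → Fin m → ℂ) :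
    IsWeightPreserving w (1 : Matrix κ κ ℂ) := by
  intro p q h
  rw [of_not_not fun hpq => h (one_apply_ne hpq)]

lemma IsWeightPreserving.mul [Fintype κ] {w : κ → Fin m → ℂ} {M N : Matrix κ κ ℂ}
    (hM : IsWeightPreserving w M) (hN : IsWeightPreserving w N) :
    IsWeightPreserving w (M * N) := by
  intro p q h
  obtain ⟨r, -, hr⟩ := Finset.exists_ne_zero_of_sum_ne_zero h
  exact (hM p r (left_ne_zero_of_mul hr)).trans (hN r q (right_ne_zero_of_mul hr))

lemma IsWeightPreserving.submatrix {w : κ → Fin m → ℂ} {M : Matrix κ κ ℂ}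
    (hM : IsWeightPreserving w M) (f : κ' → κ) :
    IsWeightPreserving (w ∘ f) (M.submatrix f f) :=
  fun p q => hM (f p) (f q)

end WeightPreserving

lemma rll_mul_rll_of_commute {M : Type*} [Monoid M] {r r' r'' a₁ a₂ a₁' a₂' b₁ b₂ b₁' b₂' : M}
    (hb₁a₂ : Commute b₁ a₂) (ha : r * a₁ * a₂ = a₂' * a₁' * r')
    (hb : r' * b₁ * b₂ = b₂' * b₁' * r'') (ha₁'b₂' : Commute a₁' b₂') :
    r * (a₁ * b₁) * (a₂ * b₂) = a₂' * b₂' * (a₁' * b₁') * r'' :=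
  calc r * (a₁ * b₁) * (a₂ * b₂) = r * a₁ * (b₁ * a₂) * b₂ := by simp only [mul_assoc]
    _ = a₂' * a₁' * (r' * b₁ * b₂) := by
      rw [hb₁a₂.eq, ← mul_assoc (r * a₁), ha]; simp only [mul_assoc]
    _ = a₂' * (a₁' * b₂') * b₁' * r'' := by rw [hb]; simp only [mul_assoc]
    _ = a₂' * b₂' * (a₁' * b₁') * r'' := by rw [ha₁'b₂'.eq]; simp only [mul_assoc]

section Embeddings

variable {α β γ : Type*} [DecidableEq β]

lemma emb13sh_mul [Fintype α] [Fintype β] [Fintype γ] (wtb : β → Fin m → ℂ) (c : ℂ)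
    (M N : (Fin m → ℂ) → Matrix (α × γ) (α × γ) ℂ) (lam : Fin m → ℂ) :
    emb13sh wtb c (M * N) lam = emb13sh wtb c M lam * emb13sh wtb c N lam := by
  ext ⟨p₁, p₂, p₃⟩ ⟨q₁, q₂, q₃⟩
  simp only [emb13sh, Pi.mul_apply, mul_apply, Fintype.sum_prod_type, ite_mul, mul_ite]
  split_ifs with h <;> simp [h, Finset.sum_ite_eq']

variable [DecidableEq α] [DecidableEq γ]

lemma emb13sh_one (wtb : β → Fin m → ℂ) (c : ℂ) (lam : Fin m → ℂ) :
    emb13sh (α := α) (γ := γ) wtb c (fun _ => 1) lam = 1 := by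
  ext ⟨p₁, p₂, p₃⟩ ⟨q₁, q₂, q₃⟩
  simp only [emb13sh, one_apply, Prod.mk.injEq]
  split_ifs <;> simp_all

lemma emb23sh_one (wta : α → Fin m → ℂ) (c : ℂ) (lam : Fin m → ℂ) :
    emb23sh (β := β) (γ := γ) wta c (fun _ => 1) lam = 1 := by
  ext ⟨p₁, p₂, p₃⟩ ⟨q₁, q₂, q₃⟩
  simp only [emb23sh, one_apply, Prod.mk.injEq]
  split_ifs <;> simp_all

def emb13shHom [Fintype α] [Fintype β] [Fintype γ] (wtb : β → Fin m → ℂ) (c : ℂ)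
    (lam : Fin m → ℂ) :
    ((Fin m → ℂ) → Matrix (α × γ) (α × γ) ℂ) →* Matrix (α × β × γ) (α × β × γ) ℂ where
  toFun F := emb13sh wtb c F lam
  map_one' := emb13sh_one wtb c lam
  map_mul' M N := emb13sh_mul wtb c M N lam

end Embeddings

lemma isRep_one {ι κ : Type*} [Fintype ι] [DecidableEq ι] [Fintype κ] [DecidableEq κ]
    (wt : ι → Fin m → ℂ) (η : ℂ) (R : ℂ → (Fin m → ℂ) → Matrix (ι × ι) (ι × ι) ℂ) :
    IsRep wt (fun _ : κ => 0) η R (fun _ _ => 1) := by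
  refine ⟨fun z₁ z₂ lam => ?_, fun _ _ => weightZero2_iff.2 (isWeightPreserving_one _)⟩
  have h12 : ∀ c, emb12sh (fun _ : κ => 0) c (R (z₁ - z₂)) lam =
      emb12sh (fun _ : κ => 0) 0 (R (z₁ - z₂)) lam := by
    intro c
    ext p q
    simp [emb12sh]
  simp only [emb13sh_one, emb23sh_one, mul_one, one_mul, h12]

def swap34 (ι α β : Type*) : ι × ι × α × β ≃ ι × ι × β × α :=
  (Equiv.refl ι).prodCongr ((Equiv.refl ι).prodCongr (Equiv.prodComm α β))

section TensorProduct

variable {ι α β : Type*} [DecidableEq β]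
variable (wt : ι → Fin m → ℂ) (wtA : α → Fin m → ℂ) (wtB : β → Fin m → ℂ)

/- On `V ⊗ V ⊗ W₁ ⊗ W₂`, `liftSh₄ wtB c M λ` is `M(λ + c h^{(4)})`, and `embijsh₄ … cₖ cₗ F λ`
is `F^{(ij)}(λ + cₖ h^{(k)} + cₗ h^{(l)})` with `{k, l}` the two remaining factors. -/

def liftSh₄ (c : ℂ) (M : (Fin m → ℂ) → Matrix (ι × ι × α) (ι × ι × α) ℂ) (lam : Fin m → ℂ) :
    Matrix (ι × ι × α × β) (ι × ι × α × β) ℂ :=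
  fun p q => M (lam + c • wtB p.2.2.2) (p.1, p.2.1, p.2.2.1) (q.1, q.2.1, q.2.2.1) *
    (if p.2.2.2 = q.2.2.2 then 1 else 0)

lemma liftSh₄_mul [Fintype ι] [Fintype α] [Fintype β] (c : ℂ)
    (M N : (Fin m → ℂ) → Matrix (ι × ι × α) (ι × ι × α) ℂ) (lam : Fin m → ℂ) :
    liftSh₄ wtB c (M * N) lam = liftSh₄ wtB c M lam * liftSh₄ wtB c N lam := by
  ext ⟨p₁, p₂, p₃, p₄⟩ ⟨q₁, q₂, q₃, q₄⟩
  simp only [liftSh₄, Pi.mul_apply, mul_apply, Fintype.sum_prod_type, ite_mul, mul_ite]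
  split_ifs with h <;> simp [h, Finset.sum_ite_eq']

variable [DecidableEq α]

def emb12sh₄ (c₃ c₄ : ℂ) (F : (Fin m → ℂ) → Matrix (ι × ι) (ι × ι) ℂ) (lam : Fin m → ℂ) :
    Matrix (ι × ι × α × β) (ι × ι × α × β) ℂ :=
  liftSh₄ wtB c₄ (emb12sh wtA c₃ F) lam

lemma emb12sh_weightSum (c : ℂ) (F : (Fin m → ℂ) → Matrix (ι × ι) (ι × ι) ℂ)
    (lam : Fin m → ℂ) :
    emb12sh (fun p : α × β => wtA p.1 + wtB p.2) c F lam = emb12sh₄ wtA wtB c c F lam := by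
  ext ⟨p₁, p₂, p₃, p₄⟩ ⟨q₁, q₂, q₃, q₄⟩
  simp only [emb12sh, emb12sh₄, liftSh₄, smul_add, Prod.mk.injEq, ite_and]
  split_ifs <;> simp [add_assoc, add_comm (c • wtB _)]

lemma emb12sh₄_swap34 (c₃ c₄ : ℂ) (F : (Fin m → ℂ) → Matrix (ι × ι) (ι × ι) ℂ)
    (lam : Fin m → ℂ) :
    (emb12sh₄ wtB wtA c₄ c₃ F lam).submatrix (swap34 ι α β) (swap34 ι α β) =
      emb12sh₄ wtA wtB c₃ c₄ F lam := by
  ext ⟨p₁, p₂, p₃, p₄⟩ ⟨q₁, q₂, q₃, q₄⟩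
  simp only [emb12sh₄, liftSh₄, emb12sh, swap34, submatrix_apply, Equiv.prodCongr_apply,
    Prod.map, Equiv.refl_apply, Equiv.prodComm_apply, Prod.fst_swap, Prod.snd_swap,
    add_right_comm lam]
  by_cases h₃ : p₃ = q₃ <;> by_cases h₄ : p₄ = q₄ <;> simp [h₃, h₄]

variable [DecidableEq ι]

def emb13sh₄ (c₂ c₄ : ℂ) (F : (Fin m → ℂ) → Matrix (ι × α) (ι × α) ℂ) (lam : Fin m → ℂ) :
    Matrix (ι × ι × α × β) (ι × ι × α × β) ℂ :=
  liftSh₄ wtB c₄ (emb13sh wt c₂ F) lam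

def emb23sh₄ (c₁ c₄ : ℂ) (F : (Fin m → ℂ) → Matrix (ι × α) (ι × α) ℂ) (lam : Fin m → ℂ) :
    Matrix (ι × ι × α × β) (ι × ι × α × β) ℂ :=
  liftSh₄ wtB c₄ (emb23sh wt c₁ F) lam

def emb14sh₄ (c₂ c₃ : ℂ) (F : (Fin m → ℂ) → Matrix (ι × β) (ι × β) ℂ) (lam : Fin m → ℂ) :
    Matrix (ι × ι × α × β) (ι × ι × α × β) ℂ :=
  (emb13sh₄ wt wtA c₂ c₃ F lam).submatrix (swap34 ι α β) (swap34 ι α β)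

def emb24sh₄ (c₁ c₃ : ℂ) (F : (Fin m → ℂ) → Matrix (ι × β) (ι × β) ℂ) (lam : Fin m → ℂ) :
    Matrix (ι × ι × α × β) (ι × ι × α × β) ℂ :=
  (emb23sh₄ wt wtA c₁ c₃ F lam).submatrix (swap34 ι α β) (swap34 ι α β)

variable [Fintype ι] [Fintype α] [Fintype β]

def tensorL (η : ℂ) (LA : ℂ → (Fin m → ℂ) → Matrix (ι × α) (ι × α) ℂ)
    (LB : ℂ → (Fin m → ℂ) → Matrix (ι × β) (ι × β) ℂ) :
    ℂ → (Fin m → ℂ) → Matrix (ι × α × β) (ι × α × β) ℂ :=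
  fun z lam => emb12sh wtB η (LA z) lam * emb13sh wtA (-η) (LB z) lam

lemma emb13sh_tensorL (c η : ℂ) (LA : ℂ → (Fin m → ℂ) → Matrix (ι × α) (ι × α) ℂ)
    (LB : ℂ → (Fin m → ℂ) → Matrix (ι × β) (ι × β) ℂ) (z : ℂ) (lam : Fin m → ℂ) :
    emb13sh wt c (tensorL wtA wtB η LA LB z) lam =
      emb13sh₄ wt wtB c η (LA z) lam * emb14sh₄ wt wtA c (-η) (LB z) lam := by
  ext ⟨p₁, p₂, p₃, p₄⟩ ⟨q₁, q₂, q₃, q₄⟩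
  by_cases h : p₂ = q₂ <;>
    simp [h, tensorL, emb13sh, emb12sh, emb13sh₄, emb14sh₄, liftSh₄, swap34, mul_apply,
      Fintype.sum_prod_type, ite_mul, mul_ite, Finset.sum_ite_eq', add_right_comm lam]

lemma emb23sh_tensorL (c η : ℂ) (LA : ℂ → (Fin m → ℂ) → Matrix (ι × α) (ι × α) ℂ)
    (LB : ℂ → (Fin m → ℂ) → Matrix (ι × β) (ι × β) ℂ) (z : ℂ) (lam : Fin m → ℂ) :
    emb23sh wt c (tensorL wtA wtB η LA LB z) lam =
      emb23sh₄ wt wtB c η (LA z) lam * emb24sh₄ wt wtA c (-η) (LB z) lam := by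
  ext ⟨p₁, p₂, p₃, p₄⟩ ⟨q₁, q₂, q₃, q₄⟩
  by_cases h : p₁ = q₁ <;>
    simp [h, tensorL, emb23sh, emb12sh, emb13sh, emb23sh₄, emb24sh₄, liftSh₄, swap34, mul_apply,
      Fintype.sum_prod_type, ite_mul, mul_ite, Finset.sum_ite_eq', add_right_comm lam]

lemma RLL.liftSh₄ {η : ℂ} {R : ℂ → (Fin m → ℂ) → Matrix (ι × ι) (ι × ι) ℂ}
    {LA : ℂ → (Fin m → ℂ) → Matrix (ι × α) (ι × α) ℂ} (h : RLL wt wtA η R LA)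
    (c z₁ z₂ : ℂ) (lam : Fin m → ℂ) :
    emb12sh₄ wtA wtB η c (R (z₁ - z₂)) lam * emb13sh₄ wt wtB (-η) c (LA z₁) lam *
        emb23sh₄ wt wtB η c (LA z₂) lam =
      emb23sh₄ wt wtB (-η) c (LA z₂) lam * emb13sh₄ wt wtB η c (LA z₁) lam *
        emb12sh₄ wtA wtB (-η) c (R (z₁ - z₂)) lam := by
  simp only [emb12sh₄, emb13sh₄, emb23sh₄, ← liftSh₄_mul]
  congr 1
  funext μ
  exact h z₁ z₂ μ

lemma RLL.liftSh₄_swap34 {η : ℂ} {R : ℂ → (Fin m → ℂ) → Matrix (ι × ι) (ι × ι) ℂ}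
    {LB : ℂ → (Fin m → ℂ) → Matrix (ι × β) (ι × β) ℂ} (h : RLL wt wtB η R LB)
    (c z₁ z₂ : ℂ) (lam : Fin m → ℂ) :
    emb12sh₄ wtA wtB c η (R (z₁ - z₂)) lam * emb14sh₄ wt wtA (-η) c (LB z₁) lam *
        emb24sh₄ wt wtA η c (LB z₂) lam =
      emb24sh₄ wt wtA (-η) c (LB z₂) lam * emb14sh₄ wt wtA η c (LB z₁) lam *
        emb12sh₄ wtA wtB c (-η) (R (z₁ - z₂)) lam := by
  rw [← emb12sh₄_swap34 wtA wtB c η, ← emb12sh₄_swap34 wtA wtB c (-η)]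
  simp only [emb14sh₄, emb24sh₄, submatrix_mul_equiv, h.liftSh₄ wt wtB wtA c z₁ z₂ lam]

lemma emb13sh₄_commute_emb24sh₄ (c d : ℂ) {F : (Fin m → ℂ) → Matrix (ι × α) (ι × α) ℂ}
    {G : (Fin m → ℂ) → Matrix (ι × β) (ι × β) ℂ} (hF : ∀ μ, WeightZero2 wt wtA (F μ))
    (hG : ∀ μ, WeightZero2 wt wtB (G μ)) (lam : Fin m → ℂ) :
    Commute (emb13sh₄ wt wtB c c F lam) (emb24sh₄ wt wtA d d G lam) := by
  ext ⟨p₁, p₂, p₃, p₄⟩ ⟨q₁, q₂, q₃, q₄⟩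
  simp only [emb13sh₄, emb24sh₄, emb23sh₄, liftSh₄, emb13sh, emb23sh, swap34, mul_apply,
    submatrix_apply, Equiv.prodCongr_apply, Equiv.coe_refl, Equiv.coe_prodComm, Prod.map_apply,
    id_eq, Prod.swap_prod_mk, Fintype.sum_prod_type, ite_mul, mul_ite, mul_one, mul_zero,
    zero_mul, Finset.sum_ite_irrel, Finset.sum_ite_eq, Finset.sum_ite_eq', Finset.mem_univ,
    if_true, Finset.sum_const_zero]
  by_cases hFw : wt p₁ + wtA p₃ = wt q₁ + wtA q₃
  · by_cases hGw : wt p₂ + wtB p₄ = wt q₂ + wtB q₄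
    · have hc : c • wtB p₄ + c • wt p₂ = c • wtB q₄ + c • wt q₂ := by
        rw [← smul_add, ← smul_add, add_comm, hGw, add_comm]
      have hd : d • wtA q₃ + d • wt q₁ = d • wtA p₃ + d • wt p₁ := by
        rw [← smul_add, ← smul_add, add_comm, ← hFw, add_comm]
      rw [add_assoc lam, add_assoc lam, add_assoc lam, add_assoc lam, hc, hd, mul_comm]
    · have hG0 : ∀ μ, G μ (p₂, p₄) (q₂, q₄) = 0 := fun μ => (hG μ).apply_eq_zero hGw
      simp [hG0]
  · have hF0 : ∀ μ, F μ (p₁, p₃) (q₁, q₃) = 0 := fun μ => (hF μ).apply_eq_zero hFw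
    simp [hF0]

lemma emb14sh₄_commute_emb23sh₄ (c d : ℂ) {F : (Fin m → ℂ) → Matrix (ι × β) (ι × β) ℂ}
    {G : (Fin m → ℂ) → Matrix (ι × α) (ι × α) ℂ} (hF : ∀ μ, WeightZero2 wt wtB (F μ))
    (hG : ∀ μ, WeightZero2 wt wtA (G μ)) (lam : Fin m → ℂ) :
    Commute (emb14sh₄ wt wtA c c F lam) (emb23sh₄ wt wtB d d G lam) := by
  have hG' : emb23sh₄ wt wtB d d G lam =
      (emb24sh₄ wt wtB d d G lam).submatrix (swap34 ι α β) (swap34 ι α β) := rfl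
  rw [hG', emb14sh₄, Commute, SemiconjBy, submatrix_mul_equiv, submatrix_mul_equiv,
    (emb13sh₄_commute_emb24sh₄ wt wtB wtA c d hF hG lam).eq]

lemma tensorL_weightZero {η : ℂ} {LA : ℂ → (Fin m → ℂ) → Matrix (ι × α) (ι × α) ℂ}
    {LB : ℂ → (Fin m → ℂ) → Matrix (ι × β) (ι × β) ℂ}
    (hA : ∀ z μ, WeightZero2 wt wtA (LA z μ)) (hB : ∀ z μ, WeightZero2 wt wtB (LB z μ))
    (z : ℂ) (lam : Fin m → ℂ) :
    WeightZero2 wt (fun p : α × β => wtA p.1 + wtB p.2) (tensorL wtA wtB η LA LB z lam) := by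
  rw [weightZero2_iff]
  refine IsWeightPreserving.mul (fun p q h => ?_) (fun p q h => ?_)
  · obtain ⟨h₃, hLA⟩ : p.2.2 = q.2.2 ∧ LA z _ (p.1, p.2.1) (q.1, q.2.1) ≠ 0 := by
      simpa [emb12sh] using h
    have := weightZero2_iff.1 (hA z _) _ _ hLA
    dsimp only at this ⊢
    rw [h₃]
    linear_combination this
  · obtain ⟨h₂, hLB⟩ : p.2.1 = q.2.1 ∧ LB z _ (p.1, p.2.2) (q.1, q.2.2) ≠ 0 := by
      simpa [emb13sh] using h
    have := weightZero2_iff.1 (hB z _) _ _ hLB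
    dsimp only at this ⊢
    rw [h₂]
    linear_combination this

theorem isRep_tensorL {η : ℂ} {R : ℂ → (Fin m → ℂ) → Matrix (ι × ι) (ι × ι) ℂ}
    {LA : ℂ → (Fin m → ℂ) → Matrix (ι × α) (ι × α) ℂ}
    {LB : ℂ → (Fin m → ℂ) → Matrix (ι × β) (ι × β) ℂ}
    (hA : IsRep wt wtA η R LA) (hB : IsRep wt wtB η R LB) :
    IsRep wt (fun p : α × β => wtA p.1 + wtB p.2) η R (tensorL wtA wtB η LA LB) := by
  refine ⟨fun z₁ z₂ lam => ?_, tensorL_weightZero wt wtA wtB hA.2 hB.2⟩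
  simp only [emb12sh_weightSum, emb13sh_tensorL, emb23sh_tensorL]
  exact rll_mul_rll_of_commute
    (emb14sh₄_commute_emb23sh₄ wt wtA wtB _ _ (hB.2 z₁) (hA.2 z₂) lam)
    (hA.1.liftSh₄ wt wtA wtB η z₁ z₂ lam) (hB.1.liftSh₄_swap34 wt wtA wtB (-η) z₁ z₂ lam)
    (emb13sh₄_commute_emb24sh₄ wt wtA wtB _ _ (hA.2 z₁) (hB.2 z₂) lam)

end TensorProduct

section Reindex

variable {ι κ κ' : Type*} [Fintype ι] [DecidableEq ι] [Fintype κ] [DecidableEq κ]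
  [Fintype κ'] [DecidableEq κ']

lemma IsRep.reindex {wt : ι → Fin m → ℂ} {wtW : κ → Fin m → ℂ} {η : ℂ}
    {R : ℂ → (Fin m → ℂ) → Matrix (ι × ι) (ι × ι) ℂ}
    {L : ℂ → (Fin m → ℂ) → Matrix (ι × κ) (ι × κ) ℂ} (h : IsRep wt wtW η R L) (e : κ' ≃ κ) :
    IsRep wt (wtW ∘ e) η R
      (fun z lam => (L z lam).submatrix (Prod.map id e) (Prod.map id e)) := by
  set E : ι × ι × κ' ≃ ι × ι × κ := (Equiv.refl ι).prodCongr ((Equiv.refl ι).prodCongr e)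
  have h12 : ∀ c F lam, emb12sh (wtW ∘ e) c F lam = (emb12sh wtW c F lam).submatrix E E := by
    intro c F lam
    ext p q
    simp [E, emb12sh, e.injective.eq_iff]
  have h13 : ∀ c z lam, emb13sh wt c (fun μ => (L z μ).submatrix (Prod.map id e) (Prod.map id e))
      lam = (emb13sh wt c (L z) lam).submatrix E E := fun _ _ _ => rfl
  have h23 : ∀ c z lam, emb23sh wt c (fun μ => (L z μ).submatrix (Prod.map id e) (Prod.map id e))
      lam = (emb23sh wt c (L z) lam).submatrix E E := fun _ _ _ => rfl
  refine ⟨fun z₁ z₂ lam => ?_, fun z lam => ?_⟩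
  · simp only [h12, h13, h23, submatrix_mul_equiv, h.1 z₁ z₂ lam]
  · exact weightZero2_iff.2 ((weightZero2_iff.1 (h.2 z lam)).submatrix (Prod.map id e))

end Reindex

lemma Fin.sum_Iio_succ {n : ℕ} {M : Type*} [AddCommMonoid M] (f : Fin (n + 1) → M) (j : Fin n) :
    ∑ i < j.succ, f i = f 0 + ∑ i < j, f i.succ := by
  simp only [← Finset.filter_gt_eq_Iio, Finset.sum_filter, Fin.sum_univ_succ, Fin.succ_pos,
    Fin.succ_lt_succ_iff, if_true]

section Monodromy

variable {ι : Type*} [Fintype ι] [DecidableEq ι] {n : ℕ}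

/-- the `j`-th factor `R^{(1j)}(z−z_j, λ − η Σ_{i<j} h^{(i)} + η Σ_{i>j} h^{(i)})`
of the monodromy matrix, acting on the auxiliary space `V` and the `j`-th
factor of `V^{⊗n}`. -/
def monFactor (wt : ι → (Fin m → ℂ)) (η : ℂ)
    (R : ℂ → (Fin m → ℂ) → Matrix (ι × ι) (ι × ι) ℂ)
    (zpts : Fin n → ℂ) (j : Fin n) (z : ℂ) (lam : Fin m → ℂ) :
    Matrix (ι × (Fin n → ι)) (ι × (Fin n → ι)) ℂ :=
  fun p q =>
    R (z - zpts j)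
        (lam - η • (∑ i ∈ Finset.univ.filter (fun i => i < j), wt (p.2 i))
             + η • (∑ i ∈ Finset.univ.filter (fun i => j < i), wt (p.2 i)))
        (p.1, p.2 j) (q.1, q.2 j) *
      (if ∀ i, i ≠ j → p.2 i = q.2 i then 1 else 0)

/-- the monodromy matrix `Π_{j} R^{(1j)}(z−z_j, λ − ηΣ_{i<j}h^{(i)} +
ηΣ_{i>j}h^{(i)})`, factors ordered from left to right. -/
def monodromy (wt : ι → (Fin m → ℂ)) (η : ℂ)
    (R : ℂ → (Fin m → ℂ) → Matrix (ι × ι) (ι × ι) ℂ)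
    (zpts : Fin n → ℂ) (z : ℂ) (lam : Fin m → ℂ) :
    Matrix (ι × (Fin n → ι)) (ι × (Fin n → ι)) ℂ :=
  (List.ofFn (fun j => monFactor wt η R zpts j z lam)).prod

variable (wt : ι → Fin m → ℂ) (η : ℂ) (R : ℂ → (Fin m → ℂ) → Matrix (ι × ι) (ι × ι) ℂ)

def splitHead : ι × (Fin (n + 1) → ι) ≃ ι × ι × (Fin n → ι) :=
  (Equiv.refl ι).prodCongr (Fin.consEquiv fun _ => ι).symm

omit [Fintype ι] in
lemma monFactor_zero (zpts : Fin (n + 1) → ℂ) (z : ℂ) (lam : Fin m → ℂ) :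
    monFactor wt η R zpts 0 z lam =
      (emb12sh (fun g : Fin n → ι => ∑ i, wt (g i)) η (R (z - zpts 0)) lam).submatrix
        splitHead splitHead := by
  ext p q
  simp [monFactor, emb12sh, splitHead, Finset.filter_lt_eq_Ioi, Fin.forall_fin_succ, funext_iff,
    Fin.tail]

omit [Fintype ι] in
lemma monFactor_succ (zpts : Fin (n + 1) → ℂ) (j : Fin n) (z : ℂ) (lam : Fin m → ℂ) :
    monFactor wt η R zpts j.succ z lam =
      (emb13sh wt (-η) (monFactor wt η R (Fin.tail zpts) j z) lam).submatrix
        splitHead splitHead := by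
  ext p q
  simp [monFactor, emb13sh, splitHead, Finset.filter_lt_eq_Ioi, Finset.filter_gt_eq_Iio,
    Fin.sum_Iio_succ, (Fin.succ_ne_zero j).symm, Fin.forall_fin_succ, Fin.tail, ite_and,
    smul_add, neg_smul, ← sub_eq_add_neg, sub_sub]

lemma monodromy_eq_prod (zpts : Fin n → ℂ) (z : ℂ) :
    monodromy wt η R zpts z = (List.ofFn fun j => monFactor wt η R zpts j z).prod := by
  funext lam
  rw [Pi.list_prod_apply, List.map_ofFn]
  rfl

lemma monodromy_succ (zpts : Fin (n + 1) → ℂ) :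
    monodromy wt η R zpts = fun z lam =>
      (tensorL wt (fun g : Fin n → ι => ∑ i, wt (g i)) η (fun z => R (z - zpts 0))
        (monodromy wt η R (Fin.tail zpts)) z lam).submatrix splitHead splitHead := by
  funext z lam
  have htail : emb13sh wt (-η) (monodromy wt η R (Fin.tail zpts) z) lam =
      (List.ofFn fun j => emb13sh wt (-η) (monFactor wt η R (Fin.tail zpts) j z) lam).prod := by
    rw [monodromy_eq_prod]
    exact (map_list_prod (emb13shHom (α := ι) (γ := Fin n → ι) wt (-η) lam) _).trans
      (by rw [List.map_ofFn]; rfl)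
  calc monodromy wt η R zpts z lam
      = monFactor wt η R zpts 0 z lam *
          (List.ofFn fun j => monFactor wt η R zpts j.succ z lam).prod := by
        rw [monodromy, List.ofFn_succ, List.prod_cons]
    _ = reindexAlgEquiv ℂ ℂ splitHead.symm
          (emb12sh (fun g : Fin n → ι => ∑ i, wt (g i)) η (R (z - zpts 0)) lam *
            (List.ofFn fun j =>
              emb13sh wt (-η) (monFactor wt η R (Fin.tail zpts) j z) lam).prod) := by
        rw [map_mul, map_list_prod, List.map_ofFn]
        simp only [monFactor_zero, monFactor_succ]
        rfl
    _ = _ := by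
        rw [← htail]
        rfl

/-- the monodromy matrix defines a representation of `A(R)` on
`V^{⊗n}` (with the sum `𝔥`-action): it is of weight zero and satisfies the
RLL relation with `R`. -/
theorem monodromy_representation
    (wt : ι → (Fin m → ℂ)) (η : ℂ)
    (R : ℂ → (Fin m → ℂ) → Matrix (ι × ι) (ι × ι) ℂ)
    (hR : IsGenR wt η R) (zpts : Fin n → ℂ) :
    IsRep wt (fun f : Fin n → ι => ∑ i, wt (f i)) η R
      (monodromy wt η R zpts) := by
  induction n with
  | zero =>
    have h1 : monodromy wt η R zpts = fun _ _ => 1 := by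
      funext z lam
      simp [monodromy]
    have h0 : (fun f : Fin 0 → ι => ∑ i, wt (f i)) = fun _ => 0 := by
      funext f
      simp
    rw [h1, h0]
    exact isRep_one wt η R
  | succ n ih =>
    have hfirst : IsRep wt wt η R (fun z => R (z - zpts 0)) :=
      ⟨fun z₁ z₂ => hR.1 z₁ z₂ (zpts 0), fun z => hR.2.2 (z - zpts 0)⟩
    have hweight : (fun f : Fin (n + 1) → ι => ∑ i, wt (f i)) =
        (fun p : ι × (Fin n → ι) => wt p.1 + ∑ i, wt (p.2 i)) ∘ (Fin.consEquiv fun _ => ι).symm :=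
      funext fun f => Fin.sum_univ_succ _
    rw [monodromy_succ, hweight]
    exact (isRep_tensorL wt wt _ hfirst (ih (Fin.tail zpts))).reindex _

end Monodromy
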